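/- Let γ ∈ SL(2,ℂ) be hyperbolic (diagonalizable with an eigenvalue λ with |λ| > 1), with repulsive fixed point y₀ and attractive fixed point z₀ on ℂP¹. Then there exists a constant C₁ > 0 such that for all natural numbers n, the n-th iterate γⁿ maps the complement of the open chordal disc D(y₀, C₁|λ|⁻ⁿ) into the closed chordal disc of center z₀ and radius C₁|λ|⁻ⁿ. -/

import Mathlib

open Complex Set

/-- Chordal distance on ℂP¹ = ℂ ∪ {∞}, modeled as `Option ℂ` (`none` = ∞). -/
noncomputable def chordal : Option ℂ → Option ℂ → ℝ
  | some z₁, some z₂ =>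
      ‖z₁ - z₂‖ /
        (Real.sqrt (1 + ‖z₁‖ ^ 2) * Real.sqrt (1 + ‖z₂‖ ^ 2))
  | some z, none => 1 / Real.sqrt (1 + ‖z‖ ^ 2)
  | none, some z => 1 / Real.sqrt (1 + ‖z‖ ^ 2)
  | none, none => 0

/-- Möbius action of a 2×2 complex matrix on ℂP¹. -/
noncomputable def mobius (g : Matrix (Fin 2) (Fin 2) ℂ) : Option ℂ → Option ℂ
  | some z => if g 1 0 * z + g 1 1 = 0 then none
              else some ((g 0 0 * z + g 0 1) / (g 1 0 * z + g 1 1))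
  | none => if g 1 0 = 0 then none else some (g 0 0 / g 1 0)

/-- Operator norm of a 2×2 complex matrix acting on ℂ² with Euclidean norm. -/
noncomputable def opNorm (g : Matrix (Fin 2) (Fin 2) ℂ) : ℝ :=
  ‖LinearMap.toContinuousLinearMap (Matrix.toEuclideanLin g)‖

/-- Membership in SU(2). -/
def SU2 (k : Matrix (Fin 2) (Fin 2) ℂ) : Prop := k.det = 1 ∧ k.conjTranspose * k = 1

/-- Open chordal disc. -/
def Dopen (z : Option ℂ) (α : ℝ) : Set (Option ℂ) := {w | chordal w z < α}

/-- Closed chordal disc. -/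
def Dclosed (z : Option ℂ) (α : ℝ) : Set (Option ℂ) := {w | chordal w z ≤ α}
abbrev SL2 := Matrix.SpecialLinearGroup (Fin 2) ℂ

/-!
In homogeneous coordinates the chordal distance between the lines through `v, w ∈ ℂ² ∖ 0` is
`|v₀w₁ - v₁w₀| / (‖v‖‖w‖)`. A matrix `g` multiplies the numerator by `det g` and shrinks each norm
by at most the operator norm of `g⁻¹`, so its Möbius map is Lipschitz for the chordal distance
with constant `|det g| ‖g⁻¹‖²`. Conjugating by `P` reduces the theorem to `D = diag(μ, μ⁻¹)` with
`μ = λⁿ`: if `[u₀ : u₁]` is at distance `|u₀|/‖u‖ ≥ |μ|⁻¹` from `0`, then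
`‖Du‖ ≥ |μ||u₀| ≥ ‖u‖ ≥ |u₁|`, so `D[u₀ : u₁]` is at distance `|μ⁻¹u₁|/‖Du‖ ≤ |μ|⁻¹` from `∞`.
The Lipschitz constant of `P⁻¹` serves as `C₁`.
-/

lemma Matrix.nonsing_inv_mul_mul_pow {n R : Type*} [Fintype n] [DecidableEq n] [CommRing R]
    {P : Matrix n n R} (hP : IsUnit P.det) (M : Matrix n n R) (k : ℕ) :
    (P⁻¹ * M * P) ^ k = P⁻¹ * M ^ k * P :=
  (Matrix.nonsingInvUnit P hP).conj_pow' M k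

lemma Matrix.diagonal_inv_pow {K : Type*} [Field K] (μ : K) (k : ℕ) :
    Matrix.diagonal ![μ, μ⁻¹] ^ k = Matrix.diagonal ![μ ^ k, (μ ^ k)⁻¹] := by
  rw [Matrix.diagonal_pow]
  congr 1
  ext i; fin_cases i <;> simp [inv_pow]

lemma EuclideanSpace.norm_eq_fin_two {𝕜 : Type*} [RCLike 𝕜] (v : EuclideanSpace 𝕜 (Fin 2)) :
    ‖v‖ = √(‖v 0‖ ^ 2 + ‖v 1‖ ^ 2) := by
  simp [EuclideanSpace.norm_eq, Fin.sum_univ_two]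

lemma Matrix.toEuclideanLin_fin_two {𝕜 : Type*} [RCLike 𝕜] (g : Matrix (Fin 2) (Fin 2) 𝕜)
    (v : EuclideanSpace 𝕜 (Fin 2)) :
    toEuclideanLin g v = !₂[g 0 0 * v 0 + g 0 1 * v 1, g 1 0 * v 0 + g 1 1 * v 1] := by
  ext i; fin_cases i <;> simp [toLpLin_apply, mulVec_fin_two]

section

open Matrix EuclideanSpace

local notation "ℂ²" => EuclideanSpace ℂ (Fin 2)

def homog : Option ℂ → ℂ²
  | some z => !₂[z, 1]
  | none => !₂[1, 0]

noncomputable def ofHomog (u : ℂ²) : Option ℂ := if u 1 = 0 then none else some (u 0 / u 1)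

def cross (v w : ℂ²) : ℂ := v 0 * w 1 - v 1 * w 0

noncomputable def projDist (v w : ℂ²) : ℝ := ‖cross v w‖ / (‖v‖ * ‖w‖)

lemma homog_ne_zero (z : Option ℂ) : homog z ≠ 0 := by
  intro h
  have h0 := congrArg (· 0) h
  have h1 := congrArg (· 1) h
  cases z <;> simp_all [homog]

lemma eq_of_homog_eq_smul {z w : Option ℂ} {c : ℂ} (h : homog z = c • homog w) : z = w := by
  have h0 := congrArg (· 0) h
  have h1 := congrArg (· 1) h
  cases z <;> cases w <;> simp [homog] at h0 h1 ⊢ <;> subst h1 <;> simp_all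

lemma exists_homog_ofHomog_eq_smul {u : ℂ²} (hu : u ≠ 0) :
    ∃ c : ℂ, c ≠ 0 ∧ homog (ofHomog u) = c • u := by
  by_cases h1 : u 1 = 0
  · have h0 : u 0 ≠ 0 := fun h0 ↦ hu (by ext i; fin_cases i <;> simp [h0, h1])
    exact ⟨(u 0)⁻¹, inv_ne_zero h0, by ext i; fin_cases i <;> simp [homog, ofHomog, h0, h1]⟩
  · exact ⟨(u 1)⁻¹, inv_ne_zero h1,
      by ext i; fin_cases i <;> simp [homog, ofHomog, h1, div_eq_inv_mul]⟩

lemma chordal_eq_projDist (z w : Option ℂ) : chordal z w = projDist (homog z) (homog w) := by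
  cases z <;> cases w <;> simp [chordal, projDist, cross, homog, norm_eq_fin_two, add_comm]

lemma projDist_comm (v w : ℂ²) : projDist v w = projDist w v := by
  rw [projDist, projDist, cross, cross, ← norm_neg, mul_comm ‖w‖]
  ring_nf

lemma projDist_smul_left {c : ℂ} (hc : c ≠ 0) (v w : ℂ²) : projDist (c • v) w = projDist v w := by
  have hcross : cross (c • v) w = c * cross v w := by
    simp only [cross, PiLp.smul_apply, smul_eq_mul]; ring
  rw [projDist, projDist, hcross, norm_smul, norm_mul, mul_assoc,
    mul_div_mul_left _ _ (norm_ne_zero_iff.mpr hc)]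

lemma projDist_smul_right {c : ℂ} (hc : c ≠ 0) (v w : ℂ²) :
    projDist v (c • w) = projDist v w := by
  rw [projDist_comm, projDist_smul_left hc, projDist_comm]

lemma projDist_homog_zero (v : ℂ²) : projDist v (homog (some 0)) = ‖v 0‖ / ‖v‖ := by
  simp [projDist, cross, homog, norm_eq_fin_two (!₂[(0 : ℂ), 1])]

lemma projDist_homog_infty (v : ℂ²) : projDist v (homog none) = ‖v 1‖ / ‖v‖ := by
  simp [projDist, cross, homog, norm_eq_fin_two (!₂[(1 : ℂ), 0])]

variable {g h : Matrix (Fin 2) (Fin 2) ℂ}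

lemma cross_toEuclideanLin (v w : ℂ²) :
    cross (toEuclideanLin g v) (toEuclideanLin g w) = g.det * cross v w := by
  simp only [cross, toEuclideanLin_fin_two, PiLp.toLp_apply, cons_val_zero, cons_val_one,
    cons_val_fin_one, det_fin_two]
  ring

lemma mobius_eq_ofHomog (z : Option ℂ) : mobius g z = ofHomog (toEuclideanLin g (homog z)) := by
  cases z <;> simp [mobius, ofHomog, homog]

lemma toEuclideanLin_inv_apply (hg : IsUnit g.det) (v : ℂ²) :
    toEuclideanLin g⁻¹ (toEuclideanLin g v) = v := by
  rw [← LinearMap.comp_apply, ← toLpLin_mul_same, nonsing_inv_mul g hg, toLpLin_one,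
    LinearMap.id_apply]

lemma toEuclideanLin_ne_zero (hg : IsUnit g.det) {v : ℂ²} (hv : v ≠ 0) :
    toEuclideanLin g v ≠ 0 :=
  fun hzero ↦ hv (by simpa [hzero] using (toEuclideanLin_inv_apply hg v).symm)

lemma exists_homog_mobius_eq_smul (hg : IsUnit g.det) (z : Option ℂ) :
    ∃ c : ℂ, c ≠ 0 ∧ homog (mobius g z) = c • toEuclideanLin g (homog z) := by
  rw [mobius_eq_ofHomog]
  exact exists_homog_ofHomog_eq_smul (toEuclideanLin_ne_zero hg (homog_ne_zero z))

lemma mobius_one (z : Option ℂ) : mobius 1 z = z := by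
  cases z <;> simp [mobius]

lemma mobius_mul (hg : IsUnit g.det) (hh : IsUnit h.det) (z : Option ℂ) :
    mobius (g * h) z = mobius g (mobius h z) := by
  have hgh : IsUnit (g * h).det := by rw [det_mul]; exact hg.mul hh
  obtain ⟨a, ha, e₁⟩ := exists_homog_mobius_eq_smul hgh z
  obtain ⟨b, hb, e₂⟩ := exists_homog_mobius_eq_smul hh z
  obtain ⟨c, hc, e₃⟩ := exists_homog_mobius_eq_smul hg (mobius h z)
  refine eq_of_homog_eq_smul (c := a / (c * b)) ?_
  rw [e₁, e₃, e₂, map_smul, toLpLin_mul_same, LinearMap.comp_apply, smul_smul, smul_smul]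
  field_simp

lemma mobius_nonsing_inv_mobius (hg : IsUnit g.det) (z : Option ℂ) :
    mobius g⁻¹ (mobius g z) = z := by
  rw [← mobius_mul (isUnit_nonsing_inv_det g hg) hg, nonsing_inv_mul g hg, mobius_one]

lemma mobius_nonsing_inv_mul_mul (hg : IsUnit g.det) (hh : IsUnit h.det) (z : Option ℂ) :
    mobius (g⁻¹ * h * g) z = mobius g⁻¹ (mobius h (mobius g z)) := by
  have hg' := isUnit_nonsing_inv_det g hg
  rw [mobius_mul (by rw [det_mul]; exact hg'.mul hh) hg, mobius_mul hg' hh]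

lemma norm_toEuclideanLin_le (v : ℂ²) : ‖toEuclideanLin g v‖ ≤ opNorm g * ‖v‖ :=
  (LinearMap.toContinuousLinearMap (toEuclideanLin g)).le_opNorm v

lemma norm_le_opNorm_inv_mul (hg : IsUnit g.det) (v : ℂ²) :
    ‖v‖ ≤ opNorm g⁻¹ * ‖toEuclideanLin g v‖ := by
  simpa only [toEuclideanLin_inv_apply hg] using
    norm_toEuclideanLin_le (g := g⁻¹) (toEuclideanLin g v)

noncomputable def chordalLipConst (g : Matrix (Fin 2) (Fin 2) ℂ) : ℝ := ‖g.det‖ * opNorm g⁻¹ ^ 2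

lemma chordalLipConst_pos (hg : IsUnit g.det) : 0 < chordalLipConst g := by
  have hdet : 0 < ‖g.det‖ := norm_pos_iff.mpr hg.ne_zero
  have hinv : g⁻¹ ≠ 0 := fun hzero ↦ by simpa [hzero] using isUnit_nonsing_inv_det g hg
  have hnorm : 0 < opNorm g⁻¹ := by simpa [opNorm] using hinv
  unfold chordalLipConst
  positivity

lemma projDist_toEuclideanLin_le (hg : IsUnit g.det) {v w : ℂ²} (hv : v ≠ 0) (hw : w ≠ 0) :
    projDist (toEuclideanLin g v) (toEuclideanLin g w) ≤ chordalLipConst g * projDist v w := by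
  set K := opNorm g⁻¹
  have hv' := norm_le_opNorm_inv_mul hg v
  have hw' := norm_le_opNorm_inv_mul hg w
  have hgv := norm_pos_iff.mpr (toEuclideanLin_ne_zero hg hv)
  have hgw := norm_pos_iff.mpr (toEuclideanLin_ne_zero hg hw)
  have hK : 0 < K := (mul_pos_iff_of_pos_right hgv).mp ((norm_pos_iff.mpr hv).trans_le hv')
  have hvw : ‖v‖ * ‖w‖ ≤ K ^ 2 * (‖toEuclideanLin g v‖ * ‖toEuclideanLin g w‖) := by
    calc ‖v‖ * ‖w‖ ≤ (K * ‖toEuclideanLin g v‖) * (K * ‖toEuclideanLin g w‖) := by gcongr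
      _ = _ := by ring
  rw [projDist, projDist, cross_toEuclideanLin, norm_mul, chordalLipConst]
  calc ‖g.det‖ * ‖cross v w‖ / (‖toEuclideanLin g v‖ * ‖toEuclideanLin g w‖)
      = ‖g.det‖ * K ^ 2 * ‖cross v w‖ /
          (K ^ 2 * (‖toEuclideanLin g v‖ * ‖toEuclideanLin g w‖)) := by
        field_simp
    _ ≤ ‖g.det‖ * K ^ 2 * ‖cross v w‖ / (‖v‖ * ‖w‖) := by gcongr
    _ = _ := mul_div_assoc _ _ _

lemma chordal_mobius_le (hg : IsUnit g.det) (z w : Option ℂ) :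
    chordal (mobius g z) (mobius g w) ≤ chordalLipConst g * chordal z w := by
  obtain ⟨a, ha, hz⟩ := exists_homog_mobius_eq_smul hg z
  obtain ⟨b, hb, hw⟩ := exists_homog_mobius_eq_smul hg w
  rw [chordal_eq_projDist, chordal_eq_projDist, hz, hw, projDist_smul_left ha,
    projDist_smul_right hb]
  exact projDist_toEuclideanLin_le hg (homog_ne_zero z) (homog_ne_zero w)

lemma isUnit_det_diagonal_inv {μ : ℂ} (hμ : μ ≠ 0) : IsUnit (diagonal ![μ, μ⁻¹]).det := by
  simp [hμ]

lemma chordal_mobius_diagonal_infty_le {μ : ℂ} (hμ : μ ≠ 0) {w : Option ℂ}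
    (hw : ‖μ‖⁻¹ ≤ chordal w (some 0)) :
    chordal (mobius (diagonal ![μ, μ⁻¹]) w) none ≤ ‖μ‖⁻¹ := by
  obtain ⟨c, hc, hcw⟩ := exists_homog_mobius_eq_smul (isUnit_det_diagonal_inv hμ) w
  set u := homog w
  set Du : ℂ² := !₂[μ * u 0, μ⁻¹ * u 1]
  have hu : 0 < ‖u‖ := norm_pos_iff.mpr (homog_ne_zero w)
  have hDu : toEuclideanLin (diagonal ![μ, μ⁻¹]) u = Du := by simp [Du, toEuclideanLin_fin_two]
  rw [chordal_eq_projDist, projDist_homog_zero, le_div_iff₀ hu] at hw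
  rw [chordal_eq_projDist, hcw, projDist_smul_left hc, projDist_homog_infty, hDu]
  have hμu : ‖u‖ ≤ ‖μ‖ * ‖u 0‖ := (inv_mul_le_iff₀ (norm_pos_iff.mpr hμ)).mp hw
  have hDu0 : ‖μ‖ * ‖u 0‖ ≤ ‖Du‖ := by simpa [Du] using PiLp.norm_apply_le Du 0
  rw [div_le_iff₀ (hu.trans_le (hμu.trans hDu0))]
  simp only [Du, cons_val_one, cons_val_fin_one, norm_mul, norm_inv]
  gcongr
  exact (PiLp.norm_apply_le u 1).trans (hμu.trans hDu0)

end

theorem hyperbolic_iterates_contract (γ : SL2)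
    (P : Matrix (Fin 2) (Fin 2) ℂ) (hP : IsUnit P.det)
    (lam : ℂ) (hlam : 1 < ‖lam‖)
    (hdiag : (↑γ : Matrix (Fin 2) (Fin 2) ℂ) = P⁻¹ * Matrix.diagonal ![lam, lam⁻¹] * P)
    (y₀ z₀ : Option ℂ) (hy : y₀ = mobius P⁻¹ (some 0)) (hz : z₀ = mobius P⁻¹ none) :
    ∃ C₁ > (0:ℝ), ∀ n : ℕ,
      mobius (↑(γ ^ n) : Matrix (Fin 2) (Fin 2) ℂ) ''
          (Dopen y₀ (C₁ * (‖lam‖)⁻¹ ^ n))ᶜ ⊆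
        Dclosed z₀ (C₁ * (‖lam‖)⁻¹ ^ n) := by
  have hlam₀ : lam ≠ 0 := norm_pos_iff.mp (one_pos.trans hlam)
  have hPinv : IsUnit P⁻¹.det := Matrix.isUnit_nonsing_inv_det P hP
  set K := chordalLipConst P⁻¹
  have hK : 0 < K := chordalLipConst_pos hPinv
  refine ⟨K, hK, fun n ↦ ?_⟩
  rintro _ ⟨w, hw, rfl⟩
  have hr : ‖lam‖⁻¹ ^ n = ‖lam ^ n‖⁻¹ := by rw [norm_pow, inv_pow]
  have hγn : (↑(γ ^ n) : Matrix (Fin 2) (Fin 2) ℂ) =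
      P⁻¹ * Matrix.diagonal ![lam ^ n, (lam ^ n)⁻¹] * P := by
    rw [Matrix.SpecialLinearGroup.coe_pow, hdiag, Matrix.nonsing_inv_mul_mul_pow hP,
      Matrix.diagonal_inv_pow]
  have hfar : ‖lam ^ n‖⁻¹ ≤ chordal (mobius P w) (some 0) := by
    refine le_of_mul_le_mul_left ?_ hK
    calc K * ‖lam ^ n‖⁻¹ ≤ chordal w y₀ := by simpa [Dopen, hr] using hw
      _ = chordal (mobius P⁻¹ (mobius P w)) (mobius P⁻¹ (some 0)) := by
        rw [mobius_nonsing_inv_mobius hP, hy]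
      _ ≤ _ := chordal_mobius_le hPinv _ _
  calc chordal (mobius (↑(γ ^ n) : Matrix (Fin 2) (Fin 2) ℂ) w) z₀
      = chordal (mobius P⁻¹ (mobius (Matrix.diagonal ![lam ^ n, (lam ^ n)⁻¹]) (mobius P w)))
          (mobius P⁻¹ none) := by
        rw [hγn, hz,
          mobius_nonsing_inv_mul_mul hP (isUnit_det_diagonal_inv (pow_ne_zero n hlam₀))]
    _ ≤ K * chordal (mobius (Matrix.diagonal ![lam ^ n, (lam ^ n)⁻¹]) (mobius P w)) none :=
        chordal_mobius_le hPinv _ _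
    _ ≤ K * ‖lam‖⁻¹ ^ n := by
        rw [hr]; gcongr; exact chordal_mobius_diagonal_infty_le (pow_ne_zero n hlam₀) hfar
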